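/- For an integer N ≥ 3, let P be the cyclic random-walk transition matrix on ℤ/Nℤ, and let λ⁰ be any vector of nonnegative real numbers on ℤ/Nℤ with Σ_i λ⁰_i = K, where K > 0. Define λⁿ_j = Σ_i λ⁰_i (P^n)(i,j). Then for every n ≥ 1 and every state j, |λⁿ_j − K/N| ≤ K·ε_n, where ε_n = ((3^{N−1} − 1)/3^{N−1})^{(n/(N−1))−1} (real exponent). -/

import Mathlib

/-!
Doeblin's argument. If some column of a stochastic matrix `Q` is bounded below by `δ`, then
subtracting `δ` from that column leaves a nonnegative matrix with row sums `1 - δ`, without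
changing `x ᵥ* Q` when `∑ x = 0`; hence `Q` contracts the `ℓ¹` norm of mass-zero vectors by the
factor `1 - δ`. For the cyclic walk every entry of `P ^ (N - 1)` is at least `3^{-(N-1)}`, as
every state is reached from every other within `N - 1` steps by moving right or staying put.
Since `P` is doubly stochastic, `λⁿ - K/N = (λ⁰ - K/N) ᵥ* Pⁿ`; the vector `λ⁰ - K/N` has mass zero
and `ℓ¹` norm at most `2K`, and each coordinate of a mass-zero vector is at most half its `ℓ¹` norm.
-/

/-- The cyclic random-walk transition matrix on `ℤ/Nℤ`:
`P i j = 1/3` if `j ∈ {i−1, i, i+1}` and `0` otherwise. -/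
noncomputable def cyclicRW (N : ℕ) : Matrix (ZMod N) (ZMod N) ℝ :=
  fun i j => if j = i - 1 ∨ j = i ∨ j = i + 1 then 1 / 3 else 0

open Finset Matrix

section Contraction

variable {ι : Type*} [Fintype ι]

theorem sum_abs_vecMul_le_mul {M : Matrix ι ι ℝ} {c : ℝ} (hM : ∀ i j, 0 ≤ M i j)
    (hrow : ∀ i, ∑ j, M i j = c) (x : ι → ℝ) :
    ∑ j, |(x ᵥ* M) j| ≤ c * ∑ i, |x i| := by
  calc ∑ j, |(x ᵥ* M) j| ≤ ∑ j, ∑ i, |x i| * M i j := by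
        gcongr with j
        refine (abs_sum_le_sum_abs _ _).trans_eq (sum_congr rfl fun i _ => ?_)
        rw [abs_mul, abs_of_nonneg (hM i j)]
    _ = c * ∑ i, |x i| := by
        rw [sum_comm, mul_sum]
        refine sum_congr rfl fun i _ => ?_
        rw [← mul_sum, hrow, mul_comm]

theorem sum_abs_sub_const_le {x : ι → ℝ} (hx : ∀ i, 0 ≤ x i) {c : ℝ} (hc : 0 ≤ c) :
    ∑ i, |x i - c| ≤ ∑ i, x i + Fintype.card ι * c := by
  calc ∑ i, |x i - c| ≤ ∑ i, (x i + c) := by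
        gcongr with i
        simpa [abs_of_nonneg (hx i), abs_of_nonneg hc] using abs_sub (x i) c
    _ = ∑ i, x i + Fintype.card ι * c := by
        rw [sum_add_distrib, sum_const, card_univ, nsmul_eq_mul]

variable [DecidableEq ι]

theorem abs_le_half_sum_abs_of_sum_eq_zero {x : ι → ℝ} (hx : ∑ i, x i = 0) (j : ι) :
    |x j| ≤ (∑ i, |x i|) / 2 := by
  have hj : x j = -∑ i ∈ univ.erase j, x i := by
    rw [eq_neg_iff_add_eq_zero, add_sum_erase _ _ (mem_univ j), hx]
  have hle : |x j| ≤ ∑ i ∈ univ.erase j, |x i| := by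
    rw [hj, abs_neg]
    exact abs_sum_le_sum_abs _ _
  rw [← add_sum_erase _ _ (mem_univ j)]
  linarith

variable {M : Matrix ι ι ℝ}

theorem sum_vecMul_of_mem_rowStochastic (hM : M ∈ rowStochastic ℝ ι) (x : ι → ℝ) :
    ∑ j, (x ᵥ* M) j = ∑ i, x i := by
  rw [← dotProduct_one, ← dotProduct_one, ← dotProduct_mulVec, hM.2]

theorem sum_abs_vecMul_le_of_le_apply (hM : M ∈ rowStochastic ℝ ι) {δ : ℝ} {j₀ : ι}
    (hδ : ∀ i, δ ≤ M i j₀) {x : ι → ℝ} (hx : ∑ i, x i = 0) :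
    ∑ j, |(x ᵥ* M) j| ≤ (1 - δ) * ∑ i, |x i| := by
  set D : Matrix ι ι ℝ := of fun _ j => (Pi.single j₀ δ : ι → ℝ) j
  have hD : x ᵥ* D = 0 := by
    ext j
    simp [D, vecMul, dotProduct, ← sum_mul, hx]
  rw [← sub_zero (x ᵥ* M), ← hD, ← vecMul_sub]
  apply sum_abs_vecMul_le_mul
  · intro i j
    rcases eq_or_ne j j₀ with rfl | hj
    · simpa [D] using hδ i
    · simpa [D, hj] using hM.1 i j
  · intro i
    simp [D, sum_sub_distrib, sum_row_of_mem_rowStochastic hM]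

theorem sum_abs_vecMul_pow_le_of_le_apply (hM : M ∈ rowStochastic ℝ ι) {δ : ℝ} {j₀ : ι}
    (hδ : ∀ i, δ ≤ M i j₀) {x : ι → ℝ} (hx : ∑ i, x i = 0) (m : ℕ) :
    ∑ j, |(x ᵥ* M ^ m) j| ≤ (1 - δ) ^ m * ∑ i, |x i| := by
  induction m with
  | zero => simp
  | succ m ih =>
    have hδ1 : 0 ≤ 1 - δ := sub_nonneg.2 ((hδ j₀).trans (le_one_of_mem_rowStochastic hM))
    have hxm : ∑ i, (x ᵥ* M ^ m) i = 0 := by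
      rw [sum_vecMul_of_mem_rowStochastic (pow_mem hM m), hx]
    rw [pow_succ, ← vecMul_vecMul]
    calc _ ≤ (1 - δ) * ∑ j, |(x ᵥ* M ^ m) j| := sum_abs_vecMul_le_of_le_apply hM hδ hxm
      _ ≤ (1 - δ) * ((1 - δ) ^ m * ∑ i, |x i|) := by gcongr
      _ = (1 - δ) ^ (m + 1) * ∑ i, |x i| := by ring

theorem sum_abs_vecMul_pow_le_of_le_pow_apply (hM : M ∈ rowStochastic ℝ ι) {k : ℕ} {δ : ℝ}
    {j₀ : ι} (hδ : ∀ i, δ ≤ (M ^ k) i j₀) {x : ι → ℝ} (hx : ∑ i, x i = 0) (n : ℕ) :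
    ∑ j, |(x ᵥ* M ^ n) j| ≤ (1 - δ) ^ (n / k) * ∑ i, |x i| := by
  have hn : M ^ n = (M ^ k) ^ (n / k) * M ^ (n % k) := by
    rw [← pow_mul, ← pow_add, Nat.div_add_mod]
  rw [hn, ← vecMul_vecMul]
  calc _ ≤ 1 * ∑ j, |(x ᵥ* (M ^ k) ^ (n / k)) j| :=
        sum_abs_vecMul_le_mul (pow_apply_nonneg hM.1 _)
          (sum_row_of_mem_rowStochastic (pow_mem hM _)) _
    _ ≤ (1 - δ) ^ (n / k) * ∑ i, |x i| := by
        rw [one_mul]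
        exact sum_abs_vecMul_pow_le_of_le_apply (pow_mem hM k) hδ hx _

theorem abs_vecMul_pow_sub_le (hM : M ∈ doublyStochastic ℝ ι) {k : ℕ} {δ : ℝ} {j₀ : ι}
    (hδ : ∀ i, δ ≤ (M ^ k) i j₀) {x : ι → ℝ} (hx : ∀ i, 0 ≤ x i) (n : ℕ) (j : ι) :
    |(x ᵥ* M ^ n) j - (∑ i, x i) / Fintype.card ι| ≤ (∑ i, x i) * (1 - δ) ^ (n / k) := by
  obtain ⟨hrow, hcol⟩ := mem_doublyStochastic_iff_mem_rowStochastic_and_mem_colStochastic.1 hM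
  set K := ∑ i, x i
  set y : ι → ℝ := fun i => x i - K / Fintype.card ι
  have hcard : (Fintype.card ι : ℝ) ≠ 0 := by
    have : Nonempty ι := ⟨j⟩
    positivity
  have hy_sum : ∑ i, y i = 0 := by
    simp only [y, sum_sub_distrib, sum_const, card_univ, nsmul_eq_mul]
    field_simp
    ring
  have hy_abs : ∑ i, |y i| ≤ 2 * K := by
    have hK : 0 ≤ K := sum_nonneg fun i _ => hx i
    refine (sum_abs_sub_const_le hx (by positivity)).trans_eq ?_
    field_simp
    ring
  have hcentre : (x ᵥ* M ^ n) j - K / Fintype.card ι = (y ᵥ* M ^ n) j := by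
    simp [y, vecMul, dotProduct, sub_mul, sum_sub_distrib, ← mul_sum,
      sum_col_of_mem_colStochastic (pow_mem hcol n)]
  rw [hcentre]
  calc |(y ᵥ* M ^ n) j| ≤ (∑ i, |(y ᵥ* M ^ n) i|) / 2 :=
        abs_le_half_sum_abs_of_sum_eq_zero
          (by rw [sum_vecMul_of_mem_rowStochastic (pow_mem hrow n), hy_sum]) j
    _ ≤ (1 - δ) ^ (n / k) * (2 * K) / 2 := by
        have hδ1 : 0 ≤ 1 - δ :=
          sub_nonneg.2 ((hδ j₀).trans (le_one_of_mem_rowStochastic (pow_mem hrow k)))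
        gcongr
        exact (sum_abs_vecMul_pow_le_of_le_pow_apply hrow hδ hy_sum n).trans (by gcongr)
    _ = K * (1 - δ) ^ (n / k) := by ring

end Contraction

theorem natCast_div_sub_one_le {K : Type*} [Field K] [LinearOrder K] [IsStrictOrderedRing K]
    [FloorSemiring K] (n k : ℕ) : (n : K) / k - 1 ≤ (n / k : ℕ) := by
  rw [← Nat.floor_div_eq_div (K := K)]
  exact (Nat.sub_one_lt_floor _).le

section CyclicRW

variable {N : ℕ}

theorem cyclicRW_nonneg (i j : ZMod N) : 0 ≤ cyclicRW N i j := by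
  unfold cyclicRW
  split_ifs <;> norm_num

theorem cyclicRW_transpose : (cyclicRW N)ᵀ = cyclicRW N := by
  ext i j
  simp only [transpose_apply, cyclicRW]
  congr 1
  grind

theorem card_sub_one_self_add_one (hN : 3 ≤ N) (i : ZMod N) :
    ({i - 1, i, i + 1} : Finset (ZMod N)).card = 3 := by
  have hne : ∀ k : ℕ, 0 < k → k < N → (k : ZMod N) ≠ 0 := fun k hk hkN h => by
    rw [ZMod.natCast_eq_zero_iff] at h
    exact absurd (Nat.le_of_dvd hk h) (by omega)
  have h1 : (1 : ZMod N) ≠ 0 := by exact_mod_cast hne 1 (by omega) (by omega)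
  have h2 : (2 : ZMod N) ≠ 0 := by exact_mod_cast hne 2 (by omega) (by omega)
  rw [card_eq_three]
  refine ⟨_, _, _, ?_, ?_, ?_, rfl⟩ <;> intro h <;> [apply h1; apply h2; apply h1] <;>
    linear_combination -h

variable [NeZero N]

theorem sum_cyclicRW_row (hN : 3 ≤ N) (i : ZMod N) : ∑ j, cyclicRW N i j = 1 := by
  have hP : ∀ j, cyclicRW N i j =
      if j ∈ ({i - 1, i, i + 1} : Finset (ZMod N)) then 1 / 3 else 0 := by
    simp [cyclicRW]
  simp_rw [hP]
  rw [sum_ite_mem, univ_inter, sum_const, card_sub_one_self_add_one hN]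
  norm_num

theorem cyclicRW_mem_doublyStochastic (hN : 3 ≤ N) :
    cyclicRW N ∈ doublyStochastic ℝ (ZMod N) := by
  have hrow : cyclicRW N ∈ rowStochastic ℝ (ZMod N) :=
    mem_rowStochastic_iff_sum.2 ⟨cyclicRW_nonneg, sum_cyclicRW_row hN⟩
  rw [mem_doublyStochastic_iff_mem_rowStochastic_and_mem_colStochastic, ← cyclicRW_transpose,
    transpose_mem_colStochastic_iff_mem_rowStochastic, cyclicRW_transpose]
  exact ⟨hrow, hrow⟩

theorem inv_three_pow_le_cyclicRW_pow_apply_add (i : ZMod N) {m d : ℕ} (hd : d ≤ m) :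
    (3 : ℝ)⁻¹ ^ m ≤ (cyclicRW N ^ m) i (i + d) := by
  induction m generalizing i d with
  | zero =>
    obtain rfl : d = 0 := by omega
    simp
  | succ m ih =>
    have step : ∀ (k : ZMod N) (e : ℕ), cyclicRW N i k = 3⁻¹ → e ≤ m → k + e = i + d →
        (3 : ℝ)⁻¹ ^ (m + 1) ≤ (cyclicRW N ^ (m + 1)) i (i + d) := by
      intro k e hk he hke
      rw [pow_succ' (cyclicRW N), mul_apply, ← hke]
      calc (3 : ℝ)⁻¹ ^ (m + 1) = cyclicRW N i k * 3⁻¹ ^ m := by rw [hk, pow_succ']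
        _ ≤ cyclicRW N i k * (cyclicRW N ^ m) k (k + e) := by
            gcongr
            exact ih k he
        _ ≤ ∑ l, cyclicRW N i l * (cyclicRW N ^ m) l (k + e) :=
            single_le_sum (f := fun l => cyclicRW N i l * (cyclicRW N ^ m) l (k + e))
              (fun l _ => mul_nonneg (cyclicRW_nonneg i l)
                (pow_apply_nonneg cyclicRW_nonneg m l _)) (mem_univ k)
    rcases d with _ | d
    · exact step i 0 (by simp [cyclicRW]) (by omega) (by simp)
    · exact step (i + 1) d (by simp [cyclicRW]) (by omega) (by push_cast; ring)

theorem inv_three_pow_le_cyclicRW_pow_apply (i j : ZMod N) :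
    (3 : ℝ)⁻¹ ^ (N - 1) ≤ (cyclicRW N ^ (N - 1)) i j := by
  have h := inv_three_pow_le_cyclicRW_pow_apply_add i (m := N - 1) (d := (j - i).val)
    (by have := ZMod.val_lt (j - i); omega)
  rwa [ZMod.natCast_zmod_val, add_sub_cancel] at h

end CyclicRW

theorem cyclicRW_mass_convergence_general (N : ℕ) [NeZero N] (hN : 3 ≤ N)
    (lam0 : ZMod N → ℝ) (hlam0_nonneg : ∀ i, 0 ≤ lam0 i)
    (K : ℝ) (hlam0_sum : ∑ i, lam0 i = K) :
    ∀ n : ℕ, 1 ≤ n → ∀ j : ZMod N,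
      |(∑ i, lam0 i * (cyclicRW N ^ n) i j) - K / (N : ℝ)| ≤
        K * (((3 : ℝ) ^ (N - 1) - 1) / (3 : ℝ) ^ (N - 1)) ^ ((n : ℝ) / ((N : ℝ) - 1) - 1) := by
  intro n _ j
  have hK : 0 ≤ K := hlam0_sum ▸ sum_nonneg fun i _ => hlam0_nonneg i
  set c := ((3 : ℝ) ^ (N - 1) - 1) / (3 : ℝ) ^ (N - 1)
  have hc : 1 - (3 : ℝ)⁻¹ ^ (N - 1) = c := by
    simp only [c, inv_pow]
    field_simp
  have hc0 : 0 < c := by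
    rw [← hc, sub_pos]
    exact pow_lt_one₀ (by norm_num) (by norm_num) (by omega)
  have hc1 : c ≤ 1 := by
    rw [← hc]
    exact sub_le_self _ (by positivity)
  have hexp : (n : ℝ) / ((N : ℝ) - 1) - 1 ≤ ((n / (N - 1) : ℕ) : ℝ) := by
    simpa [Nat.cast_sub (by omega : 1 ≤ N)] using natCast_div_sub_one_le (K := ℝ) n (N - 1)
  have h := abs_vecMul_pow_sub_le (cyclicRW_mem_doublyStochastic hN)
    (fun i => inv_three_pow_le_cyclicRW_pow_apply i 0) hlam0_nonneg n j
  rw [hlam0_sum, ZMod.card, hc, ← Real.rpow_natCast] at h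
  exact h.trans (mul_le_mul_of_nonneg_left (Real.rpow_le_rpow_of_exponent_ge hc0 hc1 hexp) hK)

/-- For `N ≥ 3` and any nonnegative vector `λ⁰` on `ℤ/Nℤ` with total
mass `K > 0`, setting `λⁿ_j = Σ_i λ⁰_i (P^n)(i,j)`, we have
`|λⁿ_j − K/N| ≤ K·((3^{N−1} − 1)/3^{N−1})^{(n/(N−1))−1}` (real exponent)
for every `n ≥ 1` and every state `j`. -/
theorem cyclicRW_mass_convergence (N : ℕ) [NeZero N] (hN : 3 ≤ N)
    (lam0 : ZMod N → ℝ) (hlam0_nonneg : ∀ i, 0 ≤ lam0 i)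
    (K : ℝ) (hK : 0 < K) (hlam0_sum : ∑ i, lam0 i = K) :
    ∀ n : ℕ, 1 ≤ n → ∀ j : ZMod N,
      |(∑ i, lam0 i * (cyclicRW N ^ n) i j) - K / (N : ℝ)| ≤
        K * (((3 : ℝ) ^ (N - 1) - 1) / (3 : ℝ) ^ (N - 1)) ^ ((n : ℝ) / ((N : ℝ) - 1) - 1) :=
  cyclicRW_mass_convergence_general N hN lam0 hlam0_nonneg K hlam0_sum
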